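/- arXiv:2510.19659 — 3 statements merged into one kernel-verified Lean document; each statement's English description precedes it below -/
import Mathlib

section
/- Let C ⊆ K be a finite nonempty set. An open ball B ⊆ K is 1-next to C (i.e., B is a nonempty intersection ∩_{c∈C} B_c where each B_c is a maximal open ball not containing c) if and only if B is a maximal open ball disjoint from C (i.e., B ∩ C = ∅ and every open ball strictly containing B meets C). -/
/- STATEMENT 2.
`K` a nontrivially valued field, `C ⊆ K` finite and nonempty. An open ball `B`
is 1-next to `C` (a nonempty intersection `⋂_{c ∈ C} B_c` with each `B_c` a maximal
open ball not containing `c`) iff `B` is a maximal open ball disjoint from `C`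
(`B` an open ball, `B ∩ C = ∅`, and every open ball strictly containing `B` meets `C`). -/

variable {K : Type*} [Field K] {Γ₀ : Type*} [LinearOrderedCommGroupWithZero Γ₀]

/-- `B` is an open ball `B_{<r}(a)` with radius `r` in the value group `Γ = |K^×|`. -/
def IsOpenBall (v : Valuation K Γ₀) (B : Set K) : Prop :=
  ∃ a y : K, y ≠ 0 ∧ B = {x : K | v (x - a) < v y}

/-- `B` is a maximal open ball not containing `c`. -/
def IsMaxOpenBallAvoiding (v : Valuation K Γ₀) (c : K) (B : Set K) : Prop :=
  IsOpenBall v B ∧ c ∉ B ∧ ∀ B' : Set K, IsOpenBall v B' → B ⊂ B' → c ∈ B'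

lemma recenter_subset (v : Valuation K Γ₀) {a b : K} {r : Γ₀} (h : v (b - a) < r) :
    {x : K | v (x - a) < r} ⊆ {x : K | v (x - b) < r} := by
  intro x hx
  simp only [Set.mem_setOf_eq] at *
  have hxb : x - b = (x - a) - (b - a) := by ring
  rw [hxb]
  exact (v.map_sub _ _).trans_lt (max_lt hx h)

lemma recenter (v : Valuation K Γ₀) {a b : K} {r : Γ₀} (h : v (b - a) < r) :
    {x : K | v (x - a) < r} = {x : K | v (x - b) < r} :=
  (recenter_subset v h).antisymm (recenter_subset v (by rwa [v.map_sub_swap]))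

lemma isMaxAvoid (v : Valuation K Γ₀) {b c : K} (hcb : c ≠ b) :
    IsMaxOpenBallAvoiding v c {x : K | v (x - b) < v (c - b)} := by
  have hcb0 : c - b ≠ 0 := sub_ne_zero.mpr hcb
  have hpos : (0 : Γ₀) < v (c - b) := zero_lt_iff.mpr (v.ne_zero_iff.mpr hcb0)
  refine ⟨⟨b, c - b, hcb0, rfl⟩, by simp, ?_⟩
  rintro B' ⟨a', y', hy', rfl⟩ hss
  have hb : b ∈ {x : K | v (x - a') < v y'} :=
    hss.1 (show v (b - b) < v (c - b) by simpa using hpos)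
  rw [recenter v hb]
  obtain ⟨x, hx1, hx2⟩ := Set.exists_of_ssubset hss
  rw [recenter v hb] at hx1
  simp only [Set.mem_setOf_eq] at *
  exact lt_of_le_of_lt (not_lt.mp hx2) hx1

lemma maxAvoid_eq (v : Valuation K Γ₀) {c b : K} {S : Set K}
    (h : IsMaxOpenBallAvoiding v c S) (hb : b ∈ S) :
    S = {x : K | v (x - b) < v (c - b)} := by
  obtain ⟨⟨a, y, hy, rfl⟩, hc, hmax⟩ := h
  have hb' : v (b - a) < v y := hb
  rw [recenter v hb'] at hc ⊢
  have h1 : v y ≤ v (c - b) := not_lt.mp hc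
  have hcb : c ≠ b := by
    rintro rfl
    exact hc (show v (c - c) < v y by simpa using zero_lt_iff.mpr (v.ne_zero_iff.mpr hy))
  have h2 : ¬ v y < v (c - b) := by
    intro hlt
    have hss : {x : K | v (x - a) < v y} ⊂ {x : K | v (x - b) < v (c - b)} := by
      rw [recenter v hb']
      constructor
      · intro x hx; exact hx.trans hlt
      · intro hsub
        have hyb : b + y ∈ {x : K | v (x - b) < v (c - b)} := by simpa using hlt
        have := hsub hyb
        simp at this
    have := hmax _ ⟨b, c - b, sub_ne_zero.mpr hcb, rfl⟩ hss
    simp at this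
  rw [le_antisymm h1 (not_lt.mp h2)]

theorem oneNext_iff_maximal_disjoint (v : Valuation K Γ₀)
    (hnt : ∃ y : K, y ≠ 0 ∧ v y ≠ 1)
    (C : Set K) (hCfin : C.Finite) (hCne : C.Nonempty) (B : Set K) :
    (∃ Bc : K → Set K, (∀ c ∈ C, IsMaxOpenBallAvoiding v c (Bc c)) ∧
        B = (⋂ c ∈ C, Bc c) ∧ B.Nonempty) ↔
      (IsOpenBall v B ∧ B ∩ C = ∅ ∧
        ∀ B' : Set K, IsOpenBall v B' → B ⊂ B' → (B' ∩ C).Nonempty) := by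
  constructor
  · rintro ⟨Bc, hBc, rfl, ⟨b, hb⟩⟩
    have hbmem : ∀ c ∈ C, b ∈ Bc c := fun c hc => Set.mem_iInter₂.mp hb c hc
    have hEq : ∀ c ∈ C, Bc c = {x : K | v (x - b) < v (c - b)} := fun c hc =>
      maxAvoid_eq v (hBc c hc) (hbmem c hc)
    obtain ⟨c₀, hc₀, hmin⟩ := Set.exists_min_image C (fun c => v (c - b)) hCfin hCne
    have hc₀b : c₀ ≠ b := by
      rintro rfl
      have := hbmem c₀ hc₀
      rw [hEq c₀ hc₀] at this
      simp at this
    have hpos : (0 : Γ₀) < v (c₀ - b) :=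
      zero_lt_iff.mpr (v.ne_zero_iff.mpr (sub_ne_zero.mpr hc₀b))
    have hBeq : (⋂ c ∈ C, Bc c) = {x : K | v (x - b) < v (c₀ - b)} := by
      apply subset_antisymm
      · intro x hx
        have := Set.mem_iInter₂.mp hx c₀ hc₀
        rwa [hEq c₀ hc₀] at this
      · intro x hx
        apply Set.mem_iInter₂.mpr
        intro c hc
        rw [hEq c hc]
        exact lt_of_lt_of_le hx (hmin c hc)
    refine ⟨⟨b, c₀ - b, sub_ne_zero.mpr hc₀b, hBeq⟩, ?_, ?_⟩
    · ext x
      simp only [Set.mem_inter_iff, Set.mem_empty_iff_false, iff_false, not_and]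
      intro hx hxC
      exact (hBc x hxC).2.1 (Set.mem_iInter₂.mp hx x hxC)
    · rintro B' ⟨a', y', hy', rfl⟩ hss
      rw [hBeq] at hss
      have hbB' : b ∈ {x : K | v (x - a') < v y'} :=
        hss.1 (show v (b - b) < v (c₀ - b) by simpa using hpos)
      obtain ⟨x, hx1, hx2⟩ := Set.exists_of_ssubset hss
      rw [recenter v hbB'] at hx1
      refine ⟨c₀, ?_, hc₀⟩
      rw [recenter v hbB']
      simp only [Set.mem_setOf_eq] at *
      exact lt_of_le_of_lt (not_lt.mp hx2) hx1
  · rintro ⟨⟨a, y, hy, rfl⟩, hdisj, hmax⟩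
    have hypos : (0 : Γ₀) < v y := zero_lt_iff.mpr (v.ne_zero_iff.mpr hy)
    have haB : a ∈ {x : K | v (x - a) < v y} := by simpa using hypos
    have hCle : ∀ c ∈ C, v y ≤ v (c - a) := by
      intro c hc
      by_contra h
      exact Set.eq_empty_iff_forall_notMem.mp hdisj c ⟨not_le.mp h, hc⟩
    have hca : ∀ c ∈ C, c ≠ a := by
      intro c hc h
      have := hCle c hc
      rw [h] at this
      simp only [sub_self, map_zero] at this
      exact absurd this (not_le.mpr hypos)
    obtain ⟨c₀, hc₀, hmin⟩ := Set.exists_min_image C (fun c => v (c - a)) hCfin hCne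
    have hkey : v y = v (c₀ - a) := by
      refine le_antisymm (hCle c₀ hc₀) (not_lt.mp ?_)
      intro hlt
      have hss : {x : K | v (x - a) < v y} ⊂ {x : K | v (x - a) < v (c₀ - a)} := by
        constructor
        · intro x hx; exact hx.trans hlt
        · intro hsub
          have hyw : a + y ∈ {x : K | v (x - a) < v (c₀ - a)} := by simpa using hlt
          have := hsub hyw
          simp at this
      obtain ⟨c, hcB, hcC⟩ := hmax _ ⟨a, c₀ - a, sub_ne_zero.mpr (hca c₀ hc₀), rfl⟩ hss
      exact absurd hcB (not_lt.mpr (hmin c hcC))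
    refine ⟨fun c => {x : K | v (x - a) < v (c - a)}, fun c hc => isMaxAvoid v (hca c hc),
      ?_, ⟨a, haB⟩⟩
    apply subset_antisymm
    · intro x hx
      exact Set.mem_iInter₂.mpr fun c hc => lt_of_lt_of_le hx (hCle c hc)
    · intro x hx
      have := Set.mem_iInter₂.mp hx c₀ hc₀
      simpa [hkey] using this
end

section
/- Let a₀, …, a_n, a′₀, …, a′_n, x, x′ ∈ K satisfy rv(a_i) = rv(a′_i) for all i and rv(x) = rv(x′). Set μ = max_{0 ≤ i ≤ n} |a_i| · |x|^i and assume μ ≠ 0. Then |Σ_{i=0}^n a_i x^i − Σ_{i=0}^n a′_i (x′)^i| < μ. In particular, if |Σ a_i x^i| = μ, then rv(Σ_i a_i x^i) = rv(Σ_i a′_i (x′)^i). -/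
/- STATEMENT 8.
`K` a valued field with leading term map `rv` (modeled as cosets of `1+M`).
Given `a₀,…,a_n, a′₀,…,a′_n, x, x′ ∈ K` with `rv (a_i) = rv (a′_i)` and
`rv x = rv x′`, set `μ = max_i |a_i|·|x|^i` and assume `μ ≠ 0`.  Then
`|Σ a_i x^i − Σ a′_i x′^i| < μ`; in particular if `|Σ a_i x^i| = μ` then
`rv (Σ a_i x^i) = rv (Σ a′_i x′^i)`. -/

variable {K : Type*} [Field K] {Γ₀ : Type*} [LinearOrderedCommGroupWithZero Γ₀]

/-- The set `1 + M` of 1-units of the valuation `v`. -/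
def onePlusM (v : Valuation K Γ₀) : Set K := {z : K | v (z - 1) < 1}

/-- The leading term `rv x`, modeled concretely as the coset `x · (1 + M) ⊆ K`. -/
def rv (v : Valuation K Γ₀) (x : K) : Set K := (fun z => x * z) '' onePlusM v

private lemma mul_lt_left₀' {a b c : Γ₀} (hc : c ≠ 0) (h : a < b) : c * a < c * b :=
  mul_lt_mul_of_pos_left h (zero_lt_iff.mpr hc)

lemma mem_rv_self (v : Valuation K Γ₀) (u : K) : u ∈ rv v u :=
  ⟨1, by simp [onePlusM], mul_one u⟩

lemma rv_eq_zero_of {v : Valuation K Γ₀} {w : K} (h : rv v 0 = rv v w) : w = 0 := by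
  obtain ⟨z, -, hz⟩ := h ▸ mem_rv_self v w
  simpa using hz.symm

lemma lt_of_rv_eq {v : Valuation K Γ₀} {u w : K} (h : rv v u = rv v w) (hu : u ≠ 0) :
    v (u - w) < v u := by
  obtain ⟨z, hz, hzw⟩ := h ▸ mem_rv_self v w
  have huw : u - w = -(u * (z - 1)) := by rw [← hzw]; ring
  rw [huw, Valuation.map_neg, Valuation.map_mul]
  calc v u * v (z - 1) < v u * 1 := mul_lt_left₀' ((Valuation.ne_zero_iff v).2 hu) hz
    _ = v u := mul_one _

lemma val_eq_of_lt {v : Valuation K Γ₀} {u w : K} (h : v (u - w) < v u) : v w = v u := by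
  have := Valuation.map_sub_eq_of_lt_left v h
  rwa [sub_sub_cancel] at this

lemma rv_subset_of_lt {v : Valuation K Γ₀} {u w : K} (h : v (u - w) < v u) :
    rv v u ⊆ rv v w := by
  have hu : u ≠ 0 := by rintro rfl; simp at h
  have hvu : (0 : Γ₀) < v u := (Valuation.pos_iff v).2 hu
  have hvw : v w = v u := val_eq_of_lt h
  have hw : w ≠ 0 := by
    intro h0; rw [h0, Valuation.map_zero] at hvw; exact absurd hvw.symm (ne_of_gt hvu)
  rintro y ⟨z, hz, rfl⟩
  refine ⟨u * z / w, ?_, by field_simp⟩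
  have key : u * z / w - 1 = (u * (z - 1) + (u - w)) / w := by field_simp; ring
  rw [onePlusM, Set.mem_setOf_eq, key, map_div₀]
  rw [div_lt_iff₀ (hvw ▸ hvu), one_mul, hvw]
  refine lt_of_le_of_lt (Valuation.map_add _ _ _) (max_lt ?_ h)
  rw [Valuation.map_mul]
  calc v u * v (z - 1) < v u * 1 := mul_lt_left₀' (ne_of_gt hvu) hz
    _ = v u := mul_one _

lemma rv_eq_of_lt {v : Valuation K Γ₀} {u w : K} (h : v (u - w) < v u) :
    rv v u = rv v w := by
  have h2 : v (w - u) < v w := by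
    rw [val_eq_of_lt h]
    rwa [← Valuation.map_neg, neg_sub] at h
  exact le_antisymm (rv_subset_of_lt h) (rv_subset_of_lt h2)

lemma pow_diff_lt {v : Valuation K Γ₀} {x x' : K} (h : v (x - x') < v x) (i : ℕ) :
    v (x ^ i - x' ^ i) < v x ^ i := by
  have hx : x ≠ 0 := by rintro rfl; simp at h
  have hvx : v x ≠ 0 := (Valuation.ne_zero_iff v).2 hx
  have hvx' : v x' = v x := val_eq_of_lt h
  induction i with
  | zero => simpa using (zero_lt_one : (0:Γ₀) < 1)
  | succ i ih =>
      have key : x ^ (i+1) - x' ^ (i+1) = (x - x') * x ^ i + x' * (x ^ i - x' ^ i) := by ring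
      rw [key]
      refine lt_of_le_of_lt (Valuation.map_add _ _ _) (max_lt ?_ ?_)
      · rw [Valuation.map_mul, Valuation.map_pow, pow_succ, mul_comm (v (x - x'))]
        exact mul_lt_left₀' (pow_ne_zero i hvx) h
      · rw [Valuation.map_mul, hvx', pow_succ, mul_comm (v x ^ i)]
        exact mul_lt_left₀' hvx ih

theorem poly_rv_approximation (v : Valuation K Γ₀) (n : ℕ)
    (a a' : Fin (n + 1) → K) (x x' : K)
    (ha : ∀ i, rv v (a i) = rv v (a' i)) (hx : rv v x = rv v x')
    (hμ : (Finset.univ.sup' Finset.univ_nonempty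
        fun i : Fin (n + 1) => v (a i) * v x ^ (i : ℕ)) ≠ 0) :
    v ((∑ i : Fin (n + 1), a i * x ^ (i : ℕ)) -
        ∑ i : Fin (n + 1), a' i * x' ^ (i : ℕ)) <
      (Finset.univ.sup' Finset.univ_nonempty
        fun i : Fin (n + 1) => v (a i) * v x ^ (i : ℕ)) ∧
    (v (∑ i : Fin (n + 1), a i * x ^ (i : ℕ)) =
        (Finset.univ.sup' Finset.univ_nonempty
          fun i : Fin (n + 1) => v (a i) * v x ^ (i : ℕ)) →
      rv v (∑ i : Fin (n + 1), a i * x ^ (i : ℕ)) =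
        rv v (∑ i : Fin (n + 1), a' i * x' ^ (i : ℕ))) := by
  set μ := (Finset.univ.sup' Finset.univ_nonempty
      fun i : Fin (n + 1) => v (a i) * v x ^ (i : ℕ)) with hμdef
  have hμpos : (0 : Γ₀) < μ := zero_lt_iff.mpr hμ
  have key : ∀ i : Fin (n + 1),
      v (a i * x ^ (i : ℕ) - a' i * x' ^ (i : ℕ)) < μ := by
    intro i
    by_cases hai : a i = 0
    · have ha'i : a' i = 0 := rv_eq_zero_of (hai ▸ ha i)
      simpa [hai, ha'i] using hμpos
    · have hlt_a := lt_of_rv_eq (ha i) hai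
      have hva' : v (a' i) = v (a i) := val_eq_of_lt hlt_a
      have hle : v (a i) * v x ^ (i : ℕ) ≤ μ :=
        Finset.le_sup' (fun i : Fin (n+1) => v (a i) * v x ^ (i : ℕ)) (Finset.mem_univ i)
      by_cases hxz : x = 0
      · have hx0 : x' = 0 := rv_eq_zero_of (hxz ▸ hx)
        rcases Nat.eq_zero_or_pos (i : ℕ) with h0 | hp
        · rw [hxz, hx0, h0, pow_zero, mul_one, mul_one]
          rw [h0, pow_zero, mul_one] at hle
          exact lt_of_lt_of_le hlt_a hle
        · rw [hxz, hx0, zero_pow (by omega), mul_zero, mul_zero, sub_zero]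
          simpa using hμpos
      · have hvx : v x ≠ 0 := (Valuation.ne_zero_iff v).2 hxz
        have hlt_x := lt_of_rv_eq hx hxz
        have hpd := pow_diff_lt hlt_x (i : ℕ)
        have hterm : a i * x ^ (i:ℕ) - a' i * x' ^ (i:ℕ)
            = (a i - a' i) * x ^ (i:ℕ) + a' i * (x ^ (i:ℕ) - x' ^ (i:ℕ)) := by ring
        rw [hterm]
        refine lt_of_le_of_lt (Valuation.map_add _ _ _)
          (lt_of_lt_of_le (max_lt ?_ ?_) hle)
        · rw [Valuation.map_mul, Valuation.map_pow, mul_comm (v (a i - a' i)),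
            mul_comm (v (a i))]
          exact mul_lt_left₀' (pow_ne_zero _ hvx) hlt_a
        · rw [Valuation.map_mul, hva']
          exact mul_lt_left₀' ((Valuation.ne_zero_iff v).2 hai) hpd
  have part1 : v ((∑ i : Fin (n + 1), a i * x ^ (i : ℕ)) -
      ∑ i : Fin (n + 1), a' i * x' ^ (i : ℕ)) < μ := by
    rw [← Finset.sum_sub_distrib]
    exact Valuation.map_sum_lt v hμ fun i _ => key i
  refine ⟨part1, fun hS => rv_eq_of_lt ?_⟩
  rw [hS]
  exact part1
end

section
/- Let y₁, …, y_n ∈ K^× satisfy |y₁| = ⋯ = |y_n| = λ and have pairwise distinct leading terms rv(y_i). Write ∏_{i=1}^n (X − y_i) = X^n + Σ_{j=1}^n p_j X^{n−j}. Let Q = X^n + Σ_{j=1}^n c_j X^{n−j} ∈ K[X] be monic with |c_j − p_j| < λ^j for all j = 1, …, n. Then Q has n distinct roots r₁, …, r_n in K, which can be indexed so that rv(r_i) = rv(y_i) for every i. -/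
/- STATEMENT 9.
`K` a henselian valued field (the valuation ring `O` is a henselian local ring).
Let `y₁,…,y_n ∈ K^×` with `|y_i| = λ` and pairwise distinct leading terms, and
write `∏ (X − y_i) = X^n + Σ_j p_j X^{n−j}`.  If `Q = X^n + Σ_j c_j X^{n−j}` is
monic with `|c_j − p_j| < λ^j` for all `j = 1,…,n`, then `Q` has `n` distinct
roots `r₁,…,r_n` in `K` which can be indexed so that `rv (r_i) = rv (y_i)`. -/

open Polynomial

variable {K : Type*} [Field K] {Γ₀ : Type*} [LinearOrderedCommGroupWithZero Γ₀]

section Helpers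

lemma GWZ.mul_lt_mul_right' {a b c : Γ₀} (h : a < b) (hc : c ≠ 0) : a * c < b * c := by
  simpa [mul_comm] using mul_lt_mul_of_pos_right h (zero_lt_iff.mpr hc)

lemma v_natCast_le_one (v : Valuation K Γ₀) (m : ℕ) : v (m : K) ≤ 1 := by
  induction m with
  | zero => simp
  | succ k ih =>
    push_cast
    exact le_trans (v.map_add _ _) (max_le ih (le_of_eq v.map_one))

lemma rv_mul_right (v : Valuation K Γ₀) (x z : K) (hz : v (z - 1) < 1) :
    rv v (x * z) = rv v x := by
  have hz1 : v z = 1 := by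
    have h := v.map_add_eq_of_lt_right (x := z - 1) (y := 1) (by simpa using hz)
    simpa using h
  have hz0 : z ≠ 0 := fun h => by simp [h] at hz1
  ext w
  simp only [rv, onePlusM, Set.mem_image, Set.mem_setOf_eq]
  constructor
  · rintro ⟨u, hu, rfl⟩
    refine ⟨z * u, ?_, by ring⟩
    have he : z * u - 1 = z * (u - 1) + (z - 1) := by ring
    rw [he]
    exact lt_of_le_of_lt (v.map_add _ _)
      (max_lt (by rw [v.map_mul, hz1, one_mul]; exact hu) hz)
  · rintro ⟨u, hu, rfl⟩
    refine ⟨z⁻¹ * u, ?_, by field_simp⟩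
    have he : z⁻¹ * u - 1 = z⁻¹ * ((u - 1) + (1 - z)) := by field_simp; ring
    rw [he, v.map_mul, map_inv₀, hz1, inv_one, one_mul]
    refine lt_of_le_of_lt (v.map_add _ _) (max_lt hu ?_)
    have h1 : (1 : K) - z = -(z - 1) := by ring
    rw [h1, v.map_neg]; exact hz

lemma v_sub_eq_of_rv_ne (v : Valuation K Γ₀) {a b : K} (hb : b ≠ 0) (hab : v a = v b)
    (h : rv v a ≠ rv v b) : v (a - b) = v b := by
  have hvb : v b ≠ 0 := v.ne_zero_iff.mpr hb
  rcases lt_or_eq_of_le (le_trans (v.map_sub a b) (by rw [hab, max_self])) with hlt | heq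
  · exfalso
    apply h
    have hx : a = b * (b⁻¹ * a) := by field_simp
    rw [hx]
    apply rv_mul_right
    have he : b⁻¹ * a - 1 = b⁻¹ * (a - b) := by field_simp
    rw [he, v.map_mul, map_inv₀]
    calc (v b)⁻¹ * v (a - b) < (v b)⁻¹ * v b := by
          simpa [mul_comm] using GWZ.mul_lt_mul_right' hlt (inv_ne_zero hvb)
      _ = 1 := inv_mul_cancel₀ hvb
  · exact heq

lemma v_multiset_sum_le (v : Valuation K Γ₀) (s : Multiset K) (g : Γ₀)
    (h : ∀ x ∈ s, v x ≤ g) : v s.sum ≤ g := by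
  induction s using Multiset.induction with
  | empty => simpa using zero_le'
  | cons a s ih =>
    simp only [Multiset.sum_cons]
    exact le_trans (v.map_add _ _)
      (max_le (h a (by simp)) (ih fun x hx => h x (by simp [hx])))

lemma v_multiset_prod_eq (v : Valuation K Γ₀) (s : Multiset K) :
    v s.prod = (s.map v).prod := by
  induction s using Multiset.induction with
  | empty => simp
  | cons a s ih => simp [v.map_mul, ih]

lemma v_esymm_le (v : Valuation K Γ₀) (t : Multiset K) (lam : Γ₀) (k : ℕ)
    (h : ∀ x ∈ t, v x = lam) : v (t.esymm k) ≤ lam ^ k := by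
  apply v_multiset_sum_le
  intro x hx
  simp only [Multiset.esymm, Multiset.mem_map] at hx
  obtain ⟨u, hu, rfl⟩ := hx
  rw [Multiset.mem_powersetCard] at hu
  rw [v_multiset_prod_eq]
  have hrep : Multiset.map v u = Multiset.replicate k lam := by
    rw [Multiset.eq_replicate]
    constructor
    · simp [hu.2]
    · intro b hb
      simp only [Multiset.mem_map] at hb
      obtain ⟨a, ha, rfl⟩ := hb
      exact h a (Multiset.mem_of_le hu.1 ha)
  rw [hrep, Multiset.prod_replicate]

lemma v_coeff_prod_X_sub_C_le (v : Valuation K Γ₀) (t : Multiset K) (lam : Γ₀) (k : ℕ)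
    (h : ∀ x ∈ t, v x = lam) :
    v ((t.map fun a => X - C a).prod.coeff k) ≤ lam ^ (Multiset.card t - k) := by
  by_cases hk : k ≤ Multiset.card t
  · rw [Multiset.prod_X_sub_C_coeff t hk]
    rw [v.map_mul, v.map_pow, v.map_neg, v.map_one, one_pow, one_mul]
    exact v_esymm_le v t lam _ h
  · rw [Polynomial.coeff_eq_zero_of_natDegree_lt, v.map_zero]
    · exact zero_le'
    · refine lt_of_le_of_lt ?_ (lt_of_not_ge hk)
      refine le_trans (Polynomial.natDegree_multiset_prod_le (t.map fun a => X - C a)) ?_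
      rw [Multiset.map_map]
      calc ((t.map (Polynomial.natDegree ∘ fun a => X - C a))).sum
          ≤ (t.map fun _ => 1).sum := by
            refine Multiset.sum_map_le_sum_map _ _ fun i _ => ?_
            simp [natDegree_X_sub_C]
        _ = Multiset.card t := by simp [Multiset.sum_replicate]

lemma transform_eval (n : ℕ) (P : K[X]) (hP : P.natDegree < n + 1) (u a : K) (hu : u ≠ 0) :
    (∑ k ∈ Finset.range (n+1), C (P.coeff k * u⁻¹ ^ (n - k)) * X ^ k).eval a
      = u⁻¹ ^ n * P.eval (u * a) := by
  rw [eval_finset_sum, eval_eq_sum_range' hP, Finset.mul_sum]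
  refine Finset.sum_congr rfl fun k hk => ?_
  rw [Finset.mem_range, Nat.lt_succ_iff] at hk
  rw [eval_mul, eval_C, eval_pow, eval_X, pow_sub₀ _ (inv_ne_zero hu) hk]
  simp only [inv_pow, inv_inv, mul_pow]
  ring

lemma transform_deriv_eval_one (n : ℕ) (P : K[X]) (hP : P.natDegree < n + 1) (u : K)
    (hu : u ≠ 0) :
    (derivative (∑ k ∈ Finset.range (n+1), C (P.coeff k * u⁻¹ ^ (n - k)) * X ^ k)).eval 1
      = u⁻¹ ^ (n - 1) * (derivative P).eval u := by
  have hPsum : P = ∑ k ∈ Finset.range (n+1), C (P.coeff k) * X ^ k := by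
    conv_lhs => rw [P.as_sum_range' (n+1) hP]
    simp only [C_mul_X_pow_eq_monomial]
  conv_rhs => rw [hPsum]
  rw [derivative_sum, derivative_sum, eval_finset_sum, eval_finset_sum, Finset.mul_sum]
  refine Finset.sum_congr rfl fun k hk => ?_
  rw [Finset.mem_range, Nat.lt_succ_iff] at hk
  rw [derivative_C_mul_X_pow, derivative_C_mul_X_pow, eval_mul, eval_mul, eval_C, eval_C,
    eval_pow, eval_pow, eval_X, eval_X, one_pow, mul_one]
  rcases Nat.eq_zero_or_pos k with rfl | hk1
  · simp
  · have h1 : n - k = (n - 1) - (k - 1) := by omega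
    have h2 : k - 1 ≤ n - 1 := by omega
    rw [h1, pow_sub₀ _ (inv_ne_zero hu) h2]
    simp only [inv_pow, inv_inv]
    ring

lemma isUnit_valuationSubring_iff (v : Valuation K Γ₀) (x : v.valuationSubring) :
    IsUnit x ↔ v (x : K) = 1 := by
  constructor
  · rintro ⟨⟨a, b, hab, _⟩, rfl⟩
    have h : (a : K) * (b : K) = 1 := by
      have := congrArg (Subtype.val) hab
      simpa using this
    have h1 : v (a : K) * v (b : K) = 1 := by rw [← v.map_mul, h, v.map_one]
    have ha : v (a : K) ≤ 1 := a.2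
    have hb : v (b : K) ≤ 1 := b.2
    refine le_antisymm ha ?_
    calc (1 : Γ₀) = v (a : K) * v (b : K) := h1.symm
      _ ≤ v (a : K) * 1 := mul_le_mul' le_rfl hb
      _ = v (a : K) := mul_one _
  · intro hx
    have hx0 : (x : K) ≠ 0 := fun h => by simp [h] at hx
    have hinv : ((x : K)⁻¹) ∈ v.valuationSubring := by
      rw [Valuation.mem_valuationSubring_iff, map_inv₀, hx, inv_one]
    refine ⟨⟨x, ⟨(x : K)⁻¹, hinv⟩, ?_, ?_⟩, rfl⟩
    · ext; simp [mul_inv_cancel₀ hx0]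
    · ext; simp [inv_mul_cancel₀ hx0]

lemma mem_maximalIdeal_valuationSubring_iff (v : Valuation K Γ₀) (x : v.valuationSubring) :
    x ∈ IsLocalRing.maximalIdeal v.valuationSubring ↔ v (x : K) < 1 := by
  rw [IsLocalRing.mem_maximalIdeal, mem_nonunits_iff, isUnit_valuationSubring_iff]
  exact ⟨fun h => lt_of_le_of_ne x.2 h, fun h => ne_of_lt h⟩

end Helpers

theorem hensel_roots_with_prescribed_rv (v : Valuation K Γ₀)
    (O : ValuationSubring K) (hO : ∀ x : K, x ∈ O ↔ v x ≤ 1)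
    [HenselianLocalRing O]
    (n : ℕ) (hn : 0 < n) (lam : Γ₀) (y : Fin n → K)
    (hy0 : ∀ i, y i ≠ 0) (hyval : ∀ i, v (y i) = lam)
    (hydist : ∀ i j, i ≠ j → rv v (y i) ≠ rv v (y j))
    (Q : Polynomial K) (hQmonic : Q.Monic) (hQdeg : Q.natDegree = n)
    (hcoeff : ∀ j : ℕ, 1 ≤ j → j ≤ n →
      v (Q.coeff (n - j) - (∏ i, (X - C (y i))).coeff (n - j)) < lam ^ j) :
    ∃ r : Fin n → K, Function.Injective r ∧
      (∀ i, Q.eval (r i) = 0) ∧ ∀ i, rv v (r i) = rv v (y i) := by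
  classical
  have hOeq : O = v.valuationSubring := by
    ext x
    rw [hO x, Valuation.mem_valuationSubring_iff]
  subst hOeq
  set p : K[X] := ∏ i, (X - C (y i)) with hpdef
  have hlam0 : lam ≠ 0 := by
    rw [← hyval ⟨0, hn⟩]; exact v.ne_zero_iff.mpr (hy0 _)
  have hpmonic : p.Monic := monic_prod_of_monic _ _ fun i _ => monic_X_sub_C (y i)
  have hpdeg : p.natDegree = n := by
    rw [hpdef, natDegree_prod _ _ fun i _ => X_sub_C_ne_zero (y i)]
    simp
  have hpcoeff : ∀ k : ℕ, v (p.coeff k) ≤ lam ^ (n - k) := by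
    intro k
    have hrepr : p = ((Finset.univ.val.map y).map fun a => X - C a).prod := by
      rw [hpdef, Finset.prod_eq_multiset_prod, Multiset.map_map]
      rfl
    have hmem : ∀ x ∈ Finset.univ.val.map y, v x = lam := by
      intro x hx
      simp only [Multiset.mem_map] at hx
      obtain ⟨i, _, rfl⟩ := hx
      exact hyval i
    have hb := v_coeff_prod_X_sub_C_le v (Finset.univ.val.map y) lam k hmem
    have hcard : Multiset.card (Finset.univ.val.map y) = n := by simp
    rw [hcard] at hb
    rw [hrepr]
    exact hb
  have hQn : Q.coeff n = 1 := by rw [← hQdeg]; exact hQmonic.coeff_natDegree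
  have hpn : p.coeff n = 1 := by rw [← hpdeg]; exact hpmonic.coeff_natDegree
  have hQcoeff : ∀ k, k ≤ n → v (Q.coeff k) ≤ lam ^ (n - k) := by
    intro k hk
    rcases eq_or_lt_of_le hk with rfl | hkn
    · simp [hQn]
    · have hj := hcoeff (n - k) (by omega) (by omega)
      rw [show n - (n - k) = k by omega] at hj
      have he : Q.coeff k = (Q.coeff k - p.coeff k) + p.coeff k := by ring
      rw [he]
      exact le_trans (v.map_add _ _) (max_le (le_of_lt hj) (hpcoeff k))
  set d : K[X] := Q - p with hddef
  have hdcoeff : ∀ k : ℕ, v (d.coeff k) < lam ^ (n - k) := by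
    intro k
    rcases lt_or_ge k n with hkn | hkn
    · have hj := hcoeff (n - k) (by omega) (by omega)
      rw [show n - (n - k) = k by omega] at hj
      simpa [hddef, coeff_sub] using hj
    · have h0 : d.coeff k = 0 := by
        rcases eq_or_lt_of_le hkn with rfl | hkn'
        · simp [hddef, coeff_sub, hQn, hpn]
        · rw [hddef, coeff_sub, coeff_eq_zero_of_natDegree_lt (by omega : Q.natDegree < k),
            coeff_eq_zero_of_natDegree_lt (by omega : p.natDegree < k), sub_zero]
      rw [h0, v.map_zero, show n - k = 0 by omega, pow_zero]
      exact zero_lt_one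
  have hdnat : d.natDegree ≤ n := by
    rw [hddef]
    refine le_trans (natDegree_sub_le Q p) ?_
    rw [hQdeg, hpdeg, max_self]
  have key : ∀ i : Fin n, ∃ ri : K, Q.eval ri = 0 ∧ rv v ri = rv v (y i) := by
    intro i
    set u : K := y i with hudef
    have hu0 : u ≠ 0 := hy0 i
    have hvu : v u = lam := hyval i
    have hpeval : p.eval u = 0 := by
      rw [hpdef, eval_prod]
      exact Finset.prod_eq_zero (Finset.mem_univ i) (by simp [hudef])
    have hdeval : v (d.eval u) < lam ^ n := by
      rw [eval_eq_sum_range' (by omega : d.natDegree < n + 1) u]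
      refine Valuation.map_sum_lt v (pow_ne_zero n hlam0) ?_
      intro k hk
      rw [Finset.mem_range, Nat.lt_succ_iff] at hk
      rw [v.map_mul, v.map_pow, hvu]
      calc v (d.coeff k) * lam ^ k < lam ^ (n - k) * lam ^ k :=
            GWZ.mul_lt_mul_right' (hdcoeff k) (pow_ne_zero k hlam0)
        _ = lam ^ n := by rw [← pow_add]; congr 1; omega
    have hQpd : Q = p + d := by rw [hddef]; ring
    have hQeval : v (Q.eval u) < lam ^ n := by
      rw [hQpd, eval_add, hpeval, zero_add]
      exact hdeval
    have hp'eval : v (p.derivative.eval u) = lam ^ (n - 1) := by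
      have hsplit : p = (X - C u) * ∏ j ∈ Finset.univ.erase i, (X - C (y j)) := by
        rw [hpdef, hudef, ← Finset.mul_prod_erase Finset.univ _ (Finset.mem_univ i)]
      rw [hsplit, derivative_mul, eval_add, eval_mul, eval_mul]
      simp only [derivative_sub, derivative_X, derivative_C, sub_zero, eval_one, eval_sub,
        eval_X, eval_C, sub_self, zero_mul, add_zero, one_mul]
      have h2 : (∏ j ∈ Finset.univ.erase i, (X - C (y j))).eval u
          = ∏ j ∈ Finset.univ.erase i, (u - y j) := by
        rw [eval_prod]; simp
      rw [h2, map_prod v]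
      have h3 : ∀ j ∈ Finset.univ.erase i, v (u - y j) = lam := by
        intro j hj
        have hji : j ≠ i := Finset.ne_of_mem_erase hj
        rw [← hyval j]
        exact v_sub_eq_of_rv_ne v (hy0 j) (by rw [hvu, hyval j])
          (hydist i j (Ne.symm hji))
      rw [Finset.prod_congr rfl h3, Finset.prod_const,
        Finset.card_erase_of_mem (Finset.mem_univ i)]
      simp
    have hd'eval : v (d.derivative.eval u) < lam ^ (n - 1) := by
      have hdn : (derivative d).natDegree < n := by
        have h1 := natDegree_derivative_le d
        omega
      rw [eval_eq_sum_range' hdn u]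
      refine Valuation.map_sum_lt v (pow_ne_zero _ hlam0) ?_
      intro k hk
      rw [Finset.mem_range] at hk
      rw [coeff_derivative, v.map_mul, v.map_mul, v.map_pow, hvu]
      have hcast : ((k : K) + 1) = ((k + 1 : ℕ) : K) := by push_cast; ring
      calc v (d.coeff (k+1)) * v ((k : K) + 1) * lam ^ k
          ≤ v (d.coeff (k+1)) * 1 * lam ^ k := by
            refine mul_le_mul' (mul_le_mul' le_rfl ?_) le_rfl
            rw [hcast]
            exact v_natCast_le_one v (k+1)
        _ = v (d.coeff (k+1)) * lam ^ k := by rw [mul_one]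
        _ < lam ^ (n - (k+1)) * lam ^ k :=
            GWZ.mul_lt_mul_right' (hdcoeff (k+1)) (pow_ne_zero _ hlam0)
        _ = lam ^ (n - 1) := by rw [← pow_add]; congr 1; omega
    have hQ'eval : v (Q.derivative.eval u) = lam ^ (n - 1) := by
      rw [hQpd, derivative_add, eval_add]
      have hlt : v ((derivative d).eval u) < v ((derivative p).eval u) := by
        rw [hp'eval]; exact hd'eval
      rw [Valuation.map_add_eq_of_lt_left v hlt, hp'eval]
    -- the transformed polynomial
    set fK : K[X] := ∑ k ∈ Finset.range (n+1), C (Q.coeff k * u⁻¹ ^ (n - k)) * X ^ k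
      with hfKdef
    have hQdeg' : Q.natDegree < n + 1 := by omega
    have hfKcoeff : ∀ m, m ≤ n → fK.coeff m = Q.coeff m * u⁻¹ ^ (n - m) := by
      intro m hm
      rw [hfKdef, finset_sum_coeff]
      rw [Finset.sum_eq_single m]
      · rw [coeff_C_mul, coeff_X_pow, if_pos rfl, mul_one]
      · intro b _ hbm
        rw [coeff_C_mul, coeff_X_pow, if_neg (fun h => hbm h.symm), mul_zero]
      · intro hm'
        exact absurd (Finset.mem_range.mpr (by omega)) hm'
    have hfKdeg : fK.natDegree ≤ n := by
      rw [hfKdef]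
      refine natDegree_sum_le_of_forall_le _ _ fun k hk => ?_
      refine le_trans natDegree_mul_le ?_
      rw [Finset.mem_range, Nat.lt_succ_iff] at hk
      rw [natDegree_C, natDegree_X_pow, zero_add]
      exact hk
    have hfKmonic : fK.Monic := by
      refine monic_of_natDegree_le_of_coeff_eq_one n hfKdeg ?_
      rw [hfKcoeff n le_rfl, hQn, Nat.sub_self, pow_zero, one_mul]
    have hvinvu : v u⁻¹ = lam⁻¹ := by rw [map_inv₀, hvu]
    have hcoefmem : ∀ m : ℕ, fK.coeff m ∈ v.valuationSubring := by
      intro m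
      rcases le_or_gt m n with hmn | hmn
      · rw [Valuation.mem_valuationSubring_iff, hfKcoeff m hmn, v.map_mul, v.map_pow, hvinvu]
        calc v (Q.coeff m) * lam⁻¹ ^ (n - m) ≤ lam ^ (n - m) * lam⁻¹ ^ (n - m) :=
              mul_le_mul' (hQcoeff m hmn) le_rfl
          _ = 1 := by rw [← mul_pow, mul_inv_cancel₀ hlam0, one_pow]
      · rw [coeff_eq_zero_of_natDegree_lt (lt_of_le_of_lt hfKdeg hmn)]
        exact Subring.zero_mem _
    -- the polynomial over the valuation subring
    set R := v.valuationSubring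
    set φ : R →+* K := R.subtype with hφdef
    have hφ : ∀ a : R, φ a = (a : K) := fun a => rfl
    have hφinj : Function.Injective φ := Subtype.coe_injective
    set g : R[X] := ∑ m ∈ fK.support, (monomial m) (⟨fK.coeff m, hcoefmem m⟩ : R)
      with hgdef
    have hgmap : g.map φ = fK := by
      rw [hgdef, Polynomial.map_sum]
      simp only [map_monomial]
      conv_rhs => rw [fK.as_sum_support]
      exact Finset.sum_congr rfl fun m _ => rfl
    have hgmonic : g.Monic := monic_of_injective hφinj (by rw [hgmap]; exact hfKmonic)
    have hgeval : ∀ a : R, (φ (g.eval a) : K) = fK.eval (a : K) := by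
      intro a
      rw [← hgmap, eval_map]
      exact (eval₂_at_apply φ a).symm
    have hg'eval : ∀ a : R, (φ ((derivative g).eval a) : K) = (derivative fK).eval (a : K) := by
      intro a
      rw [← hgmap, derivative_map, eval_map]
      exact (eval₂_at_apply φ a).symm
    -- Hensel hypotheses
    have hfKeval1 : v (fK.eval 1) < 1 := by
      rw [hfKdef, transform_eval n Q hQdeg' u 1 hu0, mul_one]
      rw [v.map_mul, v.map_pow, hvinvu]
      calc lam⁻¹ ^ n * v (Q.eval u) < lam⁻¹ ^ n * lam ^ n := by
            simpa [mul_comm] using GWZ.mul_lt_mul_right' hQeval (pow_ne_zero n (inv_ne_zero hlam0))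
        _ = 1 := by rw [← mul_pow, inv_mul_cancel₀ hlam0, one_pow]
    have hfKderiv1 : v ((derivative fK).eval 1) = 1 := by
      rw [hfKdef, transform_deriv_eval_one n Q hQdeg' u hu0]
      rw [v.map_mul, v.map_pow, hvinvu, hQ'eval, ← mul_pow, inv_mul_cancel₀ hlam0, one_pow]
    have h1 : g.eval 1 ∈ IsLocalRing.maximalIdeal R := by
      rw [mem_maximalIdeal_valuationSubring_iff]
      have := hgeval 1
      rw [hφ] at this
      rw [this]
      simpa using hfKeval1
    have h2 : IsUnit ((derivative g).eval 1) := by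
      rw [isUnit_valuationSubring_iff]
      have := hg'eval 1
      rw [hφ] at this
      rw [this]
      simpa using hfKderiv1
    obtain ⟨a, haroot, hamem⟩ := HenselianLocalRing.is_henselian g hgmonic 1 h1 h2
    refine ⟨u * (a : K), ?_, ?_⟩
    · have h0 : fK.eval (a : K) = 0 := by
        rw [← hgeval a, hφ, haroot.eq_zero]
        simp
      rw [hfKdef, transform_eval n Q hQdeg' u (a : K) hu0] at h0
      rcases mul_eq_zero.mp h0 with h | h
      · exact absurd h (pow_ne_zero n (inv_ne_zero hu0))
      · exact h
    · apply rv_mul_right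
      rw [mem_maximalIdeal_valuationSubring_iff] at hamem
      simpa using hamem
  choose r hr1 hr2 using key
  refine ⟨r, ?_, hr1, hr2⟩
  intro i j hij
  by_contra hne
  exact hydist i j hne (by rw [← hr2 i, ← hr2 j, hij])
end
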